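/- arXiv:1708.02506 — 2 statements merged into one kernel-verified Lean document; each statement's English description precedes it below -/
import Mathlib

section
/- Let ν be a probability measure on ℝ giving measure zero to the rationals and invariant under x ↦ -x and x ↦ -1/x. Then the pushforward under C of the measure (1/9) Σ_{i=0}^{8} (h_i)_*ν equals (1/9)(H₀)_*(C_*ν) + (2/9) Σ_{i=1}^{4} (H_i)_*(C_*ν). (Thus, started from a Γ-invariant law, the process W_n = C(X_n) evolves as a Markov chain on [0,1] with steps H_I, where P(I=0)=1/9 and P(I=i)=2/9 for i=1,2,3,4.) -/
open MeasureTheory ProbabilityTheory Filter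
open scoped ENNReal

noncomputable def hMap : Fin 9 → ℝ → ℝ :=
  ![fun x => -x⁻¹,
    fun x => 1 + x,
    fun x => x - 1,
    fun x => 1 - x⁻¹,
    fun x => -1 - x⁻¹,
    fun x => x / (1 + x),
    fun x => x / (1 - x),
    fun x => -(1 + x)⁻¹,
    fun x => (1 - x)⁻¹]

noncomputable def Cfun (x : ℝ) : ℝ := min |x| |x|⁻¹

noncomputable def HMap : Fin 5 → ℝ → ℝ :=
  ![fun x => x,
    fun x => (1 + x)⁻¹,
    fun x => 1 - x,
    fun x => min (x / (1 - x)) ((1 - x) / x),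
    fun x => x / (1 + x)]

noncomputable def cfVal (k : ℕ → ℕ) : ℝ :=
  limUnder atTop (fun n => (((List.range n).map k).foldr (fun a r => ((a : ℝ) + r)⁻¹) 0))

noncomputable def geomHalf : Measure ℕ :=
  Measure.sum (fun n => ((2 : ℝ≥0∞) ^ (n + 1))⁻¹ • Measure.dirac (n + 1))

noncomputable def bern : Measure ℝ :=
  (2 : ℝ≥0∞)⁻¹ • (Measure.dirac 1 + Measure.dirac (-1))

/-- `μ` is the law of the random continued fraction `[K₁,K₂,…]` with `Kᵢ` i.i.d.
geometric of parameter `1/2` (mass `2⁻ⁿ` at `n ≥ 1`). -/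
def IsMuStar (μ : Measure ℝ) : Prop :=
  ∃ (Ω : Type) (_ : MeasurableSpace Ω) (P : Measure Ω) (K : ℕ → Ω → ℕ),
    IsProbabilityMeasure P ∧ (∀ i, Measurable (K i)) ∧
    iIndepFun K P ∧
    (∀ i, P.map (K i) = geomHalf) ∧
    μ = P.map (fun ω => cfVal (fun i => K i ω))

noncomputable def gaussIter : ℕ → ℝ → ℝ
  | 0, x => x
  | n + 1, x => gaussIter n (Int.fract x⁻¹)

/-- the `n`-th digit (starting at `n = 0`) of the continued fraction expansion of `x ∈ (0,1)`. -/
noncomputable def cfDigit (x : ℝ) (n : ℕ) : ℕ := ⌊(gaussIter n x)⁻¹⌋₊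

/-- the Denjoy–Minkowski function of parameter 1/2. -/
noncomputable def chiHalf (y : ℝ) : ℝ :=
  ∑' n : ℕ, (-1 : ℝ) ^ n *
    (2 : ℝ) ^ (-(⌊y⌋ + ∑ j ∈ Finset.range n, (cfDigit (Int.fract y) j : ℤ)))

/-- Minkowski's question mark function evaluated at `[k₁,k₂,…]`. -/
noncomputable def qmark (k : ℕ → ℕ) : ℝ :=
  2 * ∑' n : ℕ, (-1 : ℝ) ^ n * (2 : ℝ) ^ (-(∑ j ∈ Finset.range (n + 1), (k j : ℤ)))


/-!
The maps `x ↦ ±x`, `x ↦ ±x⁻¹` form a Klein four-group `V` that preserves `ν` and leaves `C`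
invariant. As `ν` charges none of `0, ±1`, it splits as `∑_{g ∈ V} g_* ρ` with `ρ = ν|(0,1)`,
so `C_* ν = 4 ρ`. For `i ≥ 1`, `C ∘ hᵢ` is `x ↦ C(1 + x)` precomposed with an element of `V`
(a.e.), so all eight of these maps push `ν` to the same law `T`. On `(0,1)` the four maps
`x ↦ C(1 + g x)`, `g ∈ V`, are `H₁, H₂, H₄, H₃`, hence `T = ∑ⱼ (Hⱼ)_* ρ`, while `C ∘ h₀ = C`.
-/

open Set

lemma measurable_Cfun : Measurable Cfun := by
  unfold Cfun; fun_prop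

lemma measurable_hMap (i : Fin 9) : Measurable (hMap i) := by
  fin_cases i <;> simp [hMap] <;> fun_prop

lemma Cfun_neg (x : ℝ) : Cfun (-x) = Cfun x := by
  simp [Cfun]

lemma Cfun_inv (x : ℝ) : Cfun x⁻¹ = Cfun x := by
  simp [Cfun, min_comm]

lemma Cfun_of_mem_Icc {x : ℝ} (hx : x ∈ Icc 0 1) : Cfun x = x := by
  obtain rfl | hpos := hx.1.eq_or_lt
  · simp [Cfun]
  · rw [Cfun, abs_of_pos hpos, min_eq_left (hx.2.trans ((one_le_inv₀ hpos).2 hx.2))]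

lemma Cfun_of_one_le {x : ℝ} (hx : 1 ≤ x) : Cfun x = x⁻¹ := by
  rw [← Cfun_inv, Cfun_of_mem_Icc ⟨by positivity, inv_le_one_of_one_le₀ hx⟩]

lemma Cfun_one_add_eq_HMap_one {x : ℝ} (hx : x ∈ Ioo 0 1) : Cfun (1 + x) = HMap 1 x :=
  Cfun_of_one_le (by linarith [hx.1])

lemma Cfun_one_add_neg_eq_HMap_two {x : ℝ} (hx : x ∈ Ioo 0 1) : Cfun (1 + -x) = HMap 2 x :=
  Cfun_of_mem_Icc ⟨by linarith [hx.2], by linarith [hx.1]⟩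

lemma Cfun_one_add_neg_inv_eq_HMap_three {x : ℝ} (hx : x ∈ Ioo 0 1) : Cfun (1 + -x⁻¹) = HMap 3 x := by
  have hx0 : x ≠ 0 := hx.1.ne'
  have h : 1 + -x⁻¹ = -((1 - x) / x) := by field_simp; ring
  rw [h, Cfun_neg, Cfun, abs_of_pos (div_pos (by linarith [hx.2]) hx.1), inv_div, min_comm]
  rfl

lemma Cfun_one_add_inv_eq_HMap_four {x : ℝ} (hx : x ∈ Ioo 0 1) : Cfun (1 + x⁻¹) = HMap 4 x := by
  have hx0 : x ≠ 0 := hx.1.ne'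
  rw [Cfun_of_one_le (by linarith [one_le_inv₀ hx.1 |>.2 hx.2.le])]
  show _ = x / (1 + x)
  field_simp
  ring

lemma MeasureTheory.Measure.map_eq_of_ae_eq_comp {α β : Type*} [MeasurableSpace α] [MeasurableSpace β]
    {μ : Measure α} {f : α → α} {F G : α → β} (hf : Measurable f) (hμ : μ.map f = μ)
    (hG : Measurable G) (h : F =ᵐ[μ] G ∘ f) : μ.map F = μ.map G := by
  rw [Measure.map_congr h, ← Measure.map_map hG hf, hμ]

lemma MeasureTheory.Measure.restrict_eq_map_restrict_preimage {α : Type*} [MeasurableSpace α]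
    {μ : Measure α} {f : α → α} (hf : Measurable f) (hμ : μ.map f = μ) {s : Set α}
    (hs : MeasurableSet s) : μ.restrict s = (μ.restrict (f ⁻¹' s)).map f := by
  conv_lhs => rw [← hμ]
  exact Measure.restrict_map hf hs

lemma ae_ne_zero_and_abs_ne_one {ν : Measure ℝ} (hrat : ν {x : ℝ | ¬ Irrational x} = 0) :
    ∀ᵐ x ∂ν, x ≠ 0 ∧ |x| ≠ 1 := by
  filter_upwards [show ∀ᵐ x ∂ν, Irrational x from ae_iff.2 hrat] with x hx
  refine ⟨by simpa using hx.ne_int 0, fun h => ?_⟩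
  rcases (abs_eq zero_le_one).1 h with rfl | rfl
  exacts [by simpa using hx.ne_int 1, by simpa using hx.ne_int (-1)]

lemma mem_Ioo_union_of_ne_zero_of_abs_ne_one {x : ℝ} (h0 : x ≠ 0) (h1 : |x| ≠ 1) :
    x ∈ Ioo 0 1 ∪ Ioo (-1) 0 ∪ Ioi 1 ∪ Iio (-1) := by
  simp only [mem_union, mem_Ioo, mem_Ioi, mem_Iio]
  rcases h1.lt_or_gt with h | h
  · rcases abs_lt.1 h with ⟨h', h''⟩
    rcases h0.lt_or_gt with h0 | h0 <;> simp [*]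
  · rcases lt_abs.1 h with h' | h' <;> simp [*, lt_neg]

section Symmetric

variable {ν : Measure ℝ}

lemma map_inv_eq_self (hneg : ν.map (fun x => -x) = ν) (hinv : ν.map (fun x => -x⁻¹) = ν) :
    ν.map (fun x => x⁻¹) = ν := by
  have h : (fun x : ℝ => x⁻¹) = (fun x => -x) ∘ (fun x => -x⁻¹) := by
    funext x; simp
  rw [h, ← Measure.map_map measurable_neg (by fun_prop), hinv, hneg]

lemma eq_restrict_Ioo_add_map (hneg : ν.map (fun x => -x) = ν)
    (hinv : ν.map (fun x => -x⁻¹) = ν) (hν : ∀ᵐ x ∂ν, x ≠ 0 ∧ |x| ≠ 1) :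
    ν = ν.restrict (Ioo 0 1) + (ν.restrict (Ioo 0 1)).map (fun x => -x) +
      (ν.restrict (Ioo 0 1)).map (fun x => x⁻¹) + (ν.restrict (Ioo 0 1)).map (fun x => -x⁻¹) := by
  have d₁ : Disjoint (Ioo (0 : ℝ) 1) (Ioo (-1) 0) := by simp [Ioo_disjoint_Ioo]
  have d₂ : Disjoint (Ioo (0 : ℝ) 1 ∪ Ioo (-1) 0) (Ioi 1) := by
    refine disjoint_left.2 fun x hx (hy : 1 < x) => ?_
    rcases hx with ⟨-, h⟩ | ⟨-, h⟩ <;> linarith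
  have d₃ : Disjoint (Ioo (0 : ℝ) 1 ∪ Ioo (-1) 0 ∪ Ioi 1) (Iio (-1)) := by
    refine disjoint_left.2 fun x hx (hy : x < -1) => ?_
    rcases hx with (⟨h, -⟩ | ⟨h, -⟩) | (h : 1 < x) <;> linarith
  have p₁ : (fun x : ℝ => -x) ⁻¹' Ioo (-1) 0 = Ioo 0 1 := by ext x; simp
  have p₂ : (fun x : ℝ => x⁻¹) ⁻¹' Ioi 1 = Ioo 0 1 := by ext x; simp [one_lt_inv_iff₀]
  have p₃ : (fun x : ℝ => -x⁻¹) ⁻¹' Iio (-1) = Ioo 0 1 := by ext x; simp [one_lt_inv_iff₀]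
  calc ν = ν.restrict (Ioo 0 1 ∪ Ioo (-1) 0 ∪ Ioi 1 ∪ Iio (-1)) :=
        (Measure.restrict_eq_self_of_ae_mem
          (hν.mono fun x hx => mem_Ioo_union_of_ne_zero_of_abs_ne_one hx.1 hx.2)).symm
    _ = ν.restrict (Ioo 0 1) + ν.restrict (Ioo (-1) 0) + ν.restrict (Ioi 1) +
          ν.restrict (Iio (-1)) := by
      rw [Measure.restrict_union d₃ measurableSet_Iio, Measure.restrict_union d₂ measurableSet_Ioi,
        Measure.restrict_union d₁ measurableSet_Ioo]
    _ = _ := by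
      rw [Measure.restrict_eq_map_restrict_preimage (s := Ioo (-1) 0) measurable_neg hneg
          measurableSet_Ioo, p₁,
        Measure.restrict_eq_map_restrict_preimage (s := Ioi 1) measurable_inv
          (map_inv_eq_self hneg hinv) measurableSet_Ioi, p₂,
        Measure.restrict_eq_map_restrict_preimage (s := Iio (-1)) (by fun_prop) hinv
          measurableSet_Iio, p₃]

lemma map_eq_restrict_Ioo_map_add (hneg : ν.map (fun x => -x) = ν)
    (hinv : ν.map (fun x => -x⁻¹) = ν) (hν : ∀ᵐ x ∂ν, x ≠ 0 ∧ |x| ≠ 1)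
    {β : Type*} [MeasurableSpace β] {F : ℝ → β} (hF : Measurable F) :
    ν.map F = (ν.restrict (Ioo 0 1)).map F + (ν.restrict (Ioo 0 1)).map (fun x => F (-x)) +
      (ν.restrict (Ioo 0 1)).map (fun x => F x⁻¹) +
      (ν.restrict (Ioo 0 1)).map (fun x => F (-x⁻¹)) := by
  conv_lhs => rw [eq_restrict_Ioo_add_map hneg hinv hν]
  simp only [Measure.map_add _ _ hF]
  rw [Measure.map_map hF measurable_neg, Measure.map_map hF measurable_inv,
    Measure.map_map hF (by fun_prop)]
  rfl

lemma map_Cfun_eq_four_smul (hneg : ν.map (fun x => -x) = ν)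
    (hinv : ν.map (fun x => -x⁻¹) = ν) (hν : ∀ᵐ x ∂ν, x ≠ 0 ∧ |x| ≠ 1) :
    ν.map Cfun = 4 • ν.restrict (Ioo 0 1) := by
  have hρ : (ν.restrict (Ioo 0 1)).map Cfun = ν.restrict (Ioo 0 1) := by
    refine (Measure.map_congr ?_).trans Measure.map_id
    exact ae_restrict_of_forall_mem measurableSet_Ioo fun x hx =>
      Cfun_of_mem_Icc (Ioo_subset_Icc_self hx)
  rw [map_eq_restrict_Ioo_map_add hneg hinv hν measurable_Cfun]
  simp only [Cfun_neg, Cfun_inv, hρ]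
  abel

lemma map_Cfun_one_add_eq (hneg : ν.map (fun x => -x) = ν)
    (hinv : ν.map (fun x => -x⁻¹) = ν) (hν : ∀ᵐ x ∂ν, x ≠ 0 ∧ |x| ≠ 1) :
    ν.map (fun x => Cfun (1 + x)) = ∑ j : Fin 4, (ν.restrict (Ioo 0 1)).map (HMap j.succ) := by
  have on_Ioo {F : ℝ → ℝ} {j : Fin 5} (h : ∀ x ∈ Ioo (0 : ℝ) 1, F x = HMap j x) :
      (ν.restrict (Ioo 0 1)).map F = (ν.restrict (Ioo 0 1)).map (HMap j) :=
    Measure.map_congr (ae_restrict_of_forall_mem measurableSet_Ioo h)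
  rw [map_eq_restrict_Ioo_map_add hneg hinv hν (by unfold Cfun; fun_prop), Fin.sum_univ_four,
    on_Ioo fun x => Cfun_one_add_eq_HMap_one, on_Ioo fun x => Cfun_one_add_neg_eq_HMap_two,
    on_Ioo fun x => Cfun_one_add_inv_eq_HMap_four,
    on_Ioo fun x => Cfun_one_add_neg_inv_eq_HMap_three, add_right_comm]
  rfl

lemma map_Cfun_comp_hMap_succ (hneg : ν.map (fun x => -x) = ν)
    (hinv : ν.map (fun x => -x⁻¹) = ν) (h0 : ∀ᵐ x ∂ν, x ≠ 0) (i : Fin 8) :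
    ν.map (Cfun ∘ hMap i.succ) = ν.map (fun x => Cfun (1 + x)) := by
  have hT : Measurable (fun x => Cfun (1 + x)) := by unfold Cfun; fun_prop
  fin_cases i
  · rfl
  · refine Measure.map_eq_of_ae_eq_comp measurable_neg hneg hT (.of_forall fun x => ?_)
    show Cfun (x - 1) = Cfun (1 + -x)
    rw [← Cfun_neg]; ring_nf
  · refine Measure.map_eq_of_ae_eq_comp (by fun_prop) hinv hT (.of_forall fun x => ?_)
    show Cfun (1 - x⁻¹) = Cfun (1 + -x⁻¹)
    ring_nf
  · refine Measure.map_eq_of_ae_eq_comp measurable_inv (map_inv_eq_self hneg hinv) hT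
      (.of_forall fun x => ?_)
    show Cfun (-1 - x⁻¹) = Cfun (1 + x⁻¹)
    rw [← Cfun_neg]; ring_nf
  · refine Measure.map_eq_of_ae_eq_comp measurable_inv (map_inv_eq_self hneg hinv) hT
      (h0.mono fun x hx => ?_)
    show Cfun (x / (1 + x)) = Cfun (1 + x⁻¹)
    rw [← Cfun_inv (1 + x⁻¹)]
    congr 1
    field_simp
    ring
  · refine Measure.map_eq_of_ae_eq_comp (by fun_prop) hinv hT (h0.mono fun x hx => ?_)
    show Cfun (x / (1 - x)) = Cfun (1 + -x⁻¹)
    rw [← Cfun_inv, ← Cfun_neg]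
    congr 1
    field_simp
    ring
  · refine Measure.map_eq_of_ae_eq_comp measurable_id Measure.map_id hT (.of_forall fun x => ?_)
    show Cfun (-(1 + x)⁻¹) = Cfun (1 + x)
    rw [Cfun_neg, Cfun_inv]
  · refine Measure.map_eq_of_ae_eq_comp measurable_neg hneg hT (.of_forall fun x => ?_)
    show Cfun (1 - x)⁻¹ = Cfun (1 + -x)
    rw [Cfun_inv]; ring_nf

lemma sum_map_Cfun_map_hMap (hneg : ν.map (fun x => -x) = ν)
    (hinv : ν.map (fun x => -x⁻¹) = ν) (h0 : ∀ᵐ x ∂ν, x ≠ 0) :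
    ∑ i : Fin 9, (ν.map (hMap i)).map Cfun = ν.map Cfun + 8 • ν.map (fun x => Cfun (1 + x)) := by
  have h₀ : Cfun ∘ hMap 0 = Cfun := funext fun x => (Cfun_neg _).trans (Cfun_inv x)
  simp only [Measure.map_map measurable_Cfun (measurable_hMap _)]
  rw [Fin.sum_univ_succ, h₀]
  simp only [map_Cfun_comp_hMap_succ hneg hinv h0, Finset.sum_const, Finset.card_univ,
    Fintype.card_fin]

end Symmetric

theorem stmt4_general (ν : Measure ℝ)
    (hrat : ν {x : ℝ | ¬ Irrational x} = 0)
    (hneg : ν.map (fun x => -x) = ν)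
    (hinv : ν.map (fun x => -x⁻¹) = ν) :
    ((9 : ℝ≥0∞)⁻¹ • ∑ i : Fin 9, ν.map (hMap i)).map Cfun =
      (9 : ℝ≥0∞)⁻¹ • (ν.map Cfun).map (HMap 0) +
        (2 / 9 : ℝ≥0∞) • ∑ i : Fin 4, (ν.map Cfun).map (HMap i.succ) := by
  have hν := ae_ne_zero_and_abs_ne_one hrat
  rw [Measure.map_smul, Measure.map_finset_sum' measurable_Cfun.aemeasurable,
    sum_map_Cfun_map_hMap hneg hinv (hν.mono fun _ => And.left),
    map_Cfun_one_add_eq hneg hinv hν, map_Cfun_eq_four_smul hneg hinv hν]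
  have hH₀ : HMap 0 = id := rfl
  simp only [hH₀, Measure.map_id, smul_add, Measure.map_smul, ← Finset.smul_sum]
  congr 1
  rw [← Nat.cast_smul_eq_nsmul ℝ≥0∞ 8, ← Nat.cast_smul_eq_nsmul ℝ≥0∞ 4, smul_smul, smul_smul,
    ENNReal.div_eq_inv_mul]
  congr 1
  push_cast
  ring

theorem stmt4 (ν : Measure ℝ) [IsProbabilityMeasure ν]
    (hrat : ν {x : ℝ | ¬ Irrational x} = 0)
    (hneg : ν.map (fun x => -x) = ν)
    (hinv : ν.map (fun x => -x⁻¹) = ν) :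
    ((9 : ℝ≥0∞)⁻¹ • ∑ i : Fin 9, ν.map (hMap i)).map Cfun =
      (9 : ℝ≥0∞)⁻¹ • (ν.map Cfun).map (HMap 0) +
        (2 / 9 : ℝ≥0∞) • ∑ i : Fin 4, (ν.map Cfun).map (HMap i.succ) :=
  stmt4_general ν hrat hneg hinv
end

section
/- The measure μ⋆ is stationary for the Markov chain W_{n+1} = H_{I_{n+1}}(W_n) on [0,1], where the I_n are i.i.d. with P(I=0)=1/9 and P(I=i)=2/9 for i=1,2,3,4; that is, (1/9)(H₀)_*μ⋆ + (2/9) Σ_{i=1}^{4} (H_i)_*μ⋆ = μ⋆. -/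
open MeasureTheory ProbabilityTheory Filter
open scoped ENNReal

/-!
If `K ∼ Geom(1/2)` is independent of `X ∼ μ⋆`, then `1 / (K + X) ∼ μ⋆`. Since `Geom(1/2)` is
`½ δ₁ + ½ (Geom(1/2) shifted by one)`, and `H₁ x = 1 / (1 + x)`,
`H₄ (1 / (k + x)) = 1 / (k + 1 + x)`, this self-similarity gives
`μ⋆ = ½ (H₁)_*μ⋆ + ½ (H₄)_*μ⋆`. On `[0,1]` the map `H₂` swaps `H₁` and `H₄`
(`H₂ ∘ H₁ = H₄`, `H₂ ∘ H₄ = H₁`) and `H₃` undoes both (`H₃ ∘ H₁ = H₃ ∘ H₄ = id`), so `H₂` and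
`H₃` preserve `μ⋆`, and the weights add up to `1/9 + 2/9 · (2 + 1 + 1) = 1`.
-/

open Set Topology

noncomputable def cfTrunc (n : ℕ) (k : ℕ → ℕ) : ℝ :=
  ((List.range n).map k).foldr (fun a r => ((a : ℝ) + r)⁻¹) 0

lemma cfTrunc_succ (n : ℕ) (k : ℕ → ℕ) :
    cfTrunc (n + 1) k = (k 0 + cfTrunc n (fun i => k (i + 1)))⁻¹ := by
  simp only [cfTrunc, List.range_succ_eq_map, List.map_cons, List.map_map]
  rfl

lemma cfTrunc_nonneg (n : ℕ) (k : ℕ → ℕ) : 0 ≤ cfTrunc n k := by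
  induction n generalizing k with
  | zero => exact le_rfl
  | succ n ih =>
    rw [cfTrunc_succ]
    have := ih (fun i => k (i + 1))
    positivity

lemma cfTrunc_le_one (n : ℕ) {k : ℕ → ℕ} (hk : 1 ≤ k 0) : cfTrunc n k ≤ 1 := by
  cases n with
  | zero => exact zero_le_one
  | succ n =>
    rw [cfTrunc_succ, inv_le_one_iff₀]
    right
    have : (1 : ℝ) ≤ k 0 := by exact_mod_cast hk
    linarith [cfTrunc_nonneg n (fun i => k (i + 1))]

lemma measurable_cfTrunc (n : ℕ) : Measurable (cfTrunc n) := by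
  induction n with
  | zero => exact measurable_const
  | succ n ih =>
    simp only [funext (cfTrunc_succ n)]
    exact ((measurable_of_countable _).comp (measurable_pi_apply 0)).add
      (ih.comp (measurable_pi_lambda _ fun i => measurable_pi_apply (i + 1))) |>.inv

lemma abs_inv_add_inv_add_sub_le {a b y y' : ℝ} (ha : 1 ≤ a) (hb : 1 ≤ b) (hy : 0 ≤ y)
    (hy' : 0 ≤ y') :
    |(a + (b + y)⁻¹)⁻¹ - (a + (b + y')⁻¹)⁻¹| ≤ |y - y'| / 4 := by
  have hD : 2 ≤ a * (b + y) + 1 := by nlinarith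
  have hD' : 2 ≤ a * (b + y') + 1 := by nlinarith
  have hpos : 0 < (a * (b + y) + 1) * (a * (b + y') + 1) := by nlinarith
  have e : (a + (b + y)⁻¹)⁻¹ - (a + (b + y')⁻¹)⁻¹
      = (y - y') / ((a * (b + y) + 1) * (a * (b + y') + 1)) := by
    have : b + y ≠ 0 := by positivity
    have : b + y' ≠ 0 := by positivity
    field_simp
    ring
  rw [e, abs_div, abs_of_pos hpos]
  gcongr
  nlinarith

lemma abs_cfTrunc_sub_le (j : ℕ) {k : ℕ → ℕ} (hk : ∀ i, 1 ≤ k i) {n m : ℕ} (hn : 2 * j ≤ n)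
    (hm : 2 * j ≤ m) : |cfTrunc n k - cfTrunc m k| ≤ (1 / 4 : ℝ) ^ j := by
  induction j generalizing k n m with
  | zero =>
    rw [pow_zero, abs_sub_le_iff]
    constructor <;> linarith [cfTrunc_nonneg n k, cfTrunc_le_one n (hk 0), cfTrunc_nonneg m k,
      cfTrunc_le_one m (hk 0)]
  | succ j ih =>
    obtain ⟨n, rfl⟩ : ∃ n', n = n' + 2 := ⟨n - 2, by omega⟩
    obtain ⟨m, rfl⟩ : ∃ m', m = m' + 2 := ⟨m - 2, by omega⟩
    simp only [cfTrunc_succ]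
    calc _ ≤ |cfTrunc n (fun i => k (i + 2)) - cfTrunc m (fun i => k (i + 2))| / 4 :=
          abs_inv_add_inv_add_sub_le (by exact_mod_cast hk 0) (by exact_mod_cast hk 1)
            (cfTrunc_nonneg _ _) (cfTrunc_nonneg _ _)
      _ ≤ (1 / 4) ^ j / 4 := by gcongr; exact ih (fun i => hk (i + 2)) (by omega) (by omega)
      _ = (1 / 4) ^ (j + 1) := by ring

lemma cauchySeq_cfTrunc {k : ℕ → ℕ} (hk : ∀ i, 1 ≤ k i) : CauchySeq fun n => cfTrunc n k := by
  refine cauchySeq_of_le_tendsto_0 (fun N => (1 / 4 : ℝ) ^ (N / 2))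
    (fun n m N hn hm => abs_cfTrunc_sub_le (N / 2) hk (by omega) (by omega)) ?_
  exact (tendsto_pow_atTop_nhds_zero_of_lt_one (by norm_num) (by norm_num)).comp
    (Nat.tendsto_div_const_atTop two_ne_zero)

lemma tendsto_cfTrunc_cfVal {k : ℕ → ℕ} (hk : ∀ i, 1 ≤ k i) :
    Tendsto (fun n => cfTrunc n k) atTop (𝓝 (cfVal k)) :=
  (cauchySeq_cfTrunc hk).tendsto_limUnder

lemma measurable_cfVal : Measurable cfVal :=
  (StronglyMeasurable.limUnder fun n => (measurable_cfTrunc n).stronglyMeasurable).measurable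

lemma cfVal_mem_Icc {k : ℕ → ℕ} (hk : ∀ i, 1 ≤ k i) : cfVal k ∈ Icc 0 1 :=
  isClosed_Icc.mem_of_tendsto (tendsto_cfTrunc_cfVal hk)
    (Eventually.of_forall fun n => ⟨cfTrunc_nonneg n k, cfTrunc_le_one n (hk 0)⟩)

lemma cfVal_eq_inv_add {k : ℕ → ℕ} (hk : ∀ i, 1 ≤ k i) :
    cfVal k = (k 0 + cfVal (fun i => k (i + 1)))⁻¹ := by
  have htail := tendsto_cfTrunc_cfVal fun i => hk (i + 1)
  have hpos : (k 0 : ℝ) + cfVal (fun i => k (i + 1)) ≠ 0 := by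
    have : (1 : ℝ) ≤ k 0 := by exact_mod_cast hk 0
    linarith [(cfVal_mem_Icc fun i => hk (i + 1)).1]
  refine tendsto_nhds_unique ((tendsto_cfTrunc_cfVal hk).comp (tendsto_add_atTop_nat 1)) ?_
  simpa only [Function.comp_def, cfTrunc_succ] using (htail.const_add _).inv₀ hpos

lemma geomHalf_singleton_zero : geomHalf {0} = 0 := by
  simp [geomHalf, Measure.sum_apply _ (measurableSet_singleton _)]

lemma geomHalf_singleton_succ (n : ℕ) : geomHalf {n + 1} = ((2 : ℝ≥0∞) ^ (n + 1))⁻¹ := by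
  rw [geomHalf, Measure.sum_apply _ (measurableSet_singleton _), tsum_eq_single n]
  · simp
  · intro m hm
    simp [hm]

instance : IsProbabilityMeasure geomHalf := by
  constructor
  rw [geomHalf, Measure.sum_apply _ MeasurableSet.univ]
  simp_rw [Measure.smul_apply, measure_univ, smul_eq_mul, mul_one, ENNReal.inv_pow,
    ENNReal.tsum_geometric_add_one, ENNReal.one_sub_inv_two, inv_inv]
  exact ENNReal.inv_mul_cancel two_ne_zero ENNReal.ofNat_ne_top

lemma ae_one_le_geomHalf : ∀ᵐ a ∂geomHalf, 1 ≤ a := by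
  rw [ae_iff]
  simpa [Nat.lt_one_iff] using geomHalf_singleton_zero

lemma two_smul_geomHalf : (2 : ℝ≥0∞) • geomHalf = Measure.dirac 1 + geomHalf.map Nat.succ := by
  refine Measure.ext_of_singleton fun a => ?_
  rw [Measure.smul_apply, smul_eq_mul, Measure.add_apply,
    Measure.map_apply (measurable_of_countable _) (measurableSet_singleton a)]
  have two_mul_inv : (2 : ℝ≥0∞) * 2⁻¹ = 1 :=
    ENNReal.mul_inv_cancel two_ne_zero ENNReal.ofNat_ne_top
  rcases a with _ | _ | n
  · have hpre : Nat.succ ⁻¹' {0} = ∅ := by ext; simp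
    simp [geomHalf_singleton_zero, hpre]
  · have hpre : Nat.succ ⁻¹' {1} = {0} := by ext; simp
    simp [geomHalf_singleton_succ, geomHalf_singleton_zero, hpre, two_mul_inv]
  · have hpre : Nat.succ ⁻¹' {n + 2} = {n + 1} := by ext; simp
    rw [hpre, geomHalf_singleton_succ, geomHalf_singleton_succ, pow_succ' _ (n + 1),
      ENNReal.mul_inv (by simp) (by simp), ← mul_assoc, two_mul_inv, one_mul]
    simp

theorem ProbabilityTheory.iIndepFun.indepFun_zero_tail {Ω β : Type*} {mΩ : MeasurableSpace Ω}
    [MeasurableSpace β] {P : Measure Ω} {X : ℕ → Ω → β} (hX : ∀ i, Measurable (X i))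
    (h : iIndepFun X P) : IndepFun (X 0) (fun ω i => X (i + 1) ω) P := by
  have hind := indep_iSup_of_disjoint (fun i => (hX i).comap_le) h.iIndep
    (disjoint_compl_right (a := ({0} : Set ℕ)))
  rw [IndepFun_iff_Indep]
  refine indep_of_indep_of_le_right (indep_of_indep_of_le_left hind ?_) ?_
  · exact le_iSup₂_of_le 0 rfl le_rfl
  · rw [MeasurableSpace.pi, MeasurableSpace.comap_iSup]
    refine iSup_le fun i => ?_
    rw [MeasurableSpace.comap_comp]
    exact le_iSup₂_of_le (i + 1) i.succ_ne_zero le_rfl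

lemma MeasureTheory.Measure.infinitePi_map_zero_tail {β : Type*} [MeasurableSpace β]
    (ρ : Measure β) [IsProbabilityMeasure ρ] :
    (Measure.infinitePi fun _ : ℕ => ρ).map (fun k => (k 0, fun i => k (i + 1)))
      = ρ.prod (Measure.infinitePi fun _ : ℕ => ρ) := by
  have hind := (iIndepFun_infinitePi (P := fun _ : ℕ => ρ) (X := fun _ b => b)
    fun _ => measurable_id).indepFun_zero_tail fun i => measurable_pi_apply i
  rw [hind.map_prod_eq_prod_map_map (measurable_pi_apply 0).aemeasurable
    (measurable_pi_lambda _ fun i => measurable_pi_apply (i + 1)).aemeasurable,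
    Measure.infinitePi_map_eval, Measure.map_infinitePi_infinitePi_of_inj Nat.succ_injective]

noncomputable def muStar : Measure ℝ := (Measure.infinitePi fun _ : ℕ => geomHalf).map cfVal

instance : IsProbabilityMeasure muStar :=
  Measure.isProbabilityMeasure_map measurable_cfVal.aemeasurable

lemma IsMuStar.eq_muStar {μ : Measure ℝ} (hμ : IsMuStar μ) : μ = muStar := by
  obtain ⟨Ω, _, P, K, -, hK, hind, hlaw, rfl⟩ := hμ
  rw [muStar, ← funext hlaw, ← hind.map_fun_eq_infinitePi_map hK,
    Measure.map_map measurable_cfVal (measurable_pi_lambda _ hK)]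
  rfl

lemma ae_one_le_infinitePi_geomHalf :
    ∀ᵐ k ∂(Measure.infinitePi fun _ : ℕ => geomHalf), ∀ i, 1 ≤ k i :=
  ae_all_iff.2 fun i => ae_of_ae_map (measurable_pi_apply i).aemeasurable
    (by rw [Measure.infinitePi_map_eval]; exact ae_one_le_geomHalf)

lemma ae_muStar_mem_Icc : ∀ᵐ x ∂muStar, x ∈ Icc 0 1 :=
  (ae_map_iff measurable_cfVal.aemeasurable measurableSet_Icc).2
    (ae_one_le_infinitePi_geomHalf.mono fun _ => cfVal_mem_Icc)

lemma muStar_eq_map_prod :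
    muStar = (geomHalf.prod muStar).map fun p => ((p.1 : ℝ) + p.2)⁻¹ := by
  set ν := Measure.infinitePi fun _ : ℕ => geomHalf
  have hφ : Measurable fun p : ℕ × ℝ => ((p.1 : ℝ) + p.2)⁻¹ := by fun_prop
  have hzt : Measurable fun k : ℕ → ℕ => (k 0, fun i => k (i + 1)) := by fun_prop
  calc muStar = ν.map fun k => ((k 0 : ℝ) + cfVal fun i => k (i + 1))⁻¹ :=
        Measure.map_congr (ae_one_le_infinitePi_geomHalf.mono fun _ => cfVal_eq_inv_add)
    _ = (ν.map fun k => (k 0, fun i => k (i + 1))).map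
          ((fun p : ℕ × ℝ => ((p.1 : ℝ) + p.2)⁻¹) ∘ Prod.map id cfVal) := by
        rw [Measure.map_map (hφ.comp (measurable_id.prodMap measurable_cfVal)) hzt]
        rfl
    _ = (geomHalf.prod muStar).map fun p => ((p.1 : ℝ) + p.2)⁻¹ := by
        rw [Measure.infinitePi_map_zero_tail, ← Measure.map_map hφ
          (measurable_id.prodMap measurable_cfVal), ← Measure.map_prod_map _ _ measurable_id
          measurable_cfVal, Measure.map_id]
        rfl

lemma HMap_four_inv_add {a y : ℝ} (ha : 1 ≤ a) (hy : 0 ≤ y) :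
    HMap 4 (a + y)⁻¹ = (a + 1 + y)⁻¹ := by
  show (a + y)⁻¹ / (1 + (a + y)⁻¹) = _
  have : a + y ≠ 0 := by positivity
  field_simp
  ring

lemma HMap_two_HMap_one {y : ℝ} (hy : 0 ≤ y) : HMap 2 (HMap 1 y) = HMap 4 y := by
  show 1 - (1 + y)⁻¹ = y / (1 + y)
  have : 1 + y ≠ 0 := by positivity
  field_simp
  ring

lemma HMap_two_HMap_four {y : ℝ} (hy : 0 ≤ y) : HMap 2 (HMap 4 y) = HMap 1 y := by
  show 1 - y / (1 + y) = (1 + y)⁻¹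
  have : 1 + y ≠ 0 := by positivity
  field_simp
  ring

lemma self_le_inv_self {y : ℝ} (hy : y ∈ Icc 0 1) : y ≤ y⁻¹ := by
  rcases hy.1.eq_or_lt with rfl | hpos
  · simp
  · exact hy.2.trans ((one_le_inv₀ hpos).2 hy.2)

lemma HMap_three_HMap_one {y : ℝ} (hy : y ∈ Icc 0 1) : HMap 3 (HMap 1 y) = y := by
  show min ((1 + y)⁻¹ / (1 - (1 + y)⁻¹)) ((1 - (1 + y)⁻¹) / (1 + y)⁻¹) = y
  rcases hy.1.eq_or_lt with rfl | hpos
  · norm_num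
  have := hpos.ne'
  have e2 : (1 - (1 + y)⁻¹) / (1 + y)⁻¹ = y := by field_simp; ring
  rw [← inv_div (1 - (1 + y)⁻¹), e2, min_eq_right (self_le_inv_self hy)]

lemma HMap_three_HMap_four {y : ℝ} (hy : y ∈ Icc 0 1) : HMap 3 (HMap 4 y) = y := by
  show min (y / (1 + y) / (1 - y / (1 + y))) ((1 - y / (1 + y)) / (y / (1 + y))) = y
  rcases hy.1.eq_or_lt with rfl | hpos
  · norm_num
  have := hpos.ne'
  have e1 : y / (1 + y) / (1 - y / (1 + y)) = y := by field_simp; ring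
  rw [e1, ← inv_div (y / (1 + y)), e1, min_eq_left (self_le_inv_self hy)]

lemma MeasureTheory.Measure.eq_of_smul_eq_smul {α : Type*} [MeasurableSpace α] {μ ν : Measure α}
    {c : ℝ≥0∞} (hc0 : c ≠ 0) (hc : c ≠ ∞) (h : c • μ = c • ν) : μ = ν := by
  have h' := congrArg (c⁻¹ • ·) h
  simp only [smul_smul, ENNReal.inv_mul_cancel hc0 hc, one_smul] at h'
  exact h'

section Stationarity

variable {μ : Measure ℝ}

lemma measurable_HMap (i : Fin 5) : Measurable (HMap i) := by
  fin_cases i <;> simp [HMap] <;> fun_prop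

lemma map_HMap_one_add_map_HMap_four [SFinite μ]
    (hμ : μ = (geomHalf.prod μ).map fun p => ((p.1 : ℝ) + p.2)⁻¹) (h0 : ∀ᵐ y ∂μ, 0 ≤ y) :
    μ.map (HMap 1) + μ.map (HMap 4) = (2 : ℝ≥0∞) • μ := by
  set φ := fun p : ℕ × ℝ => ((p.1 : ℝ) + p.2)⁻¹
  have hφ : Measurable φ := by fun_prop
  have h1 : ((Measure.dirac 1).prod μ).map φ = μ.map (HMap 1) := by
    rw [Measure.dirac_prod, Measure.map_map hφ measurable_prodMk_left]
    congr 1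
    funext y
    simp [φ, HMap]
  have h4 : ((geomHalf.map Nat.succ).prod μ).map φ = μ.map (HMap 4) := by
    have hsucc : Measurable Nat.succ := measurable_of_countable _
    conv_rhs => rw [hμ, Measure.map_map (measurable_HMap 4) hφ]
    rw [← Measure.map_id (μ := μ), Measure.map_prod_map _ _ hsucc measurable_id, Measure.map_id,
      Measure.map_map hφ (hsucc.prodMap measurable_id)]
    refine Measure.map_congr ?_
    filter_upwards [Measure.quasiMeasurePreserving_fst.ae ae_one_le_geomHalf,
      Measure.quasiMeasurePreserving_snd.ae h0] with p ha hy
    simp only [Function.comp_apply, Prod.map_fst, Prod.map_snd, id_eq, φ, Nat.cast_succ]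
    exact (HMap_four_inv_add (by exact_mod_cast ha) hy).symm
  rw [← h1, ← h4, ← Measure.map_add _ _ hφ, ← Measure.add_prod, ← two_smul_geomHalf,
    Measure.prod_smul_left, Measure.map_smul, ← hμ]

lemma map_comp_add_map_comp_eq_two_smul {f g T : ℝ → ℝ} (hf : Measurable f)
    (hg : Measurable g) (hT : Measurable T) (hμ : μ.map f + μ.map g = (2 : ℝ≥0∞) • μ) :
    μ.map (T ∘ f) + μ.map (T ∘ g) = (2 : ℝ≥0∞) • μ.map T := by
  rw [← Measure.map_map hT hf, ← Measure.map_map hT hg, ← Measure.map_add _ _ hT, hμ,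
    Measure.map_smul]

lemma map_HMap_two (hμ : μ.map (HMap 1) + μ.map (HMap 4) = (2 : ℝ≥0∞) • μ)
    (h0 : ∀ᵐ y ∂μ, 0 ≤ y) : μ.map (HMap 2) = μ := by
  refine Measure.eq_of_smul_eq_smul two_ne_zero ENNReal.ofNat_ne_top ?_
  rw [← map_comp_add_map_comp_eq_two_smul (measurable_HMap 1) (measurable_HMap 4)
      (measurable_HMap 2) hμ,
    Measure.map_congr (f := HMap 2 ∘ HMap 1) (h0.mono fun _ => HMap_two_HMap_one),
    Measure.map_congr (f := HMap 2 ∘ HMap 4) (h0.mono fun _ => HMap_two_HMap_four), add_comm, hμ]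

lemma map_HMap_three (hμ : μ.map (HMap 1) + μ.map (HMap 4) = (2 : ℝ≥0∞) • μ)
    (h01 : ∀ᵐ y ∂μ, y ∈ Icc 0 1) : μ.map (HMap 3) = μ := by
  refine Measure.eq_of_smul_eq_smul two_ne_zero ENNReal.ofNat_ne_top ?_
  rw [← map_comp_add_map_comp_eq_two_smul (measurable_HMap 1) (measurable_HMap 4)
      (measurable_HMap 3) hμ,
    Measure.map_congr (f := HMap 3 ∘ HMap 1) (h01.mono fun _ => HMap_three_HMap_one),
    Measure.map_congr (f := HMap 3 ∘ HMap 4) (h01.mono fun _ => HMap_three_HMap_four),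
    Measure.map_id', two_smul]

end Stationarity

theorem stmt12 (μ : Measure ℝ) (hμ : IsMuStar μ) :
    (9 : ℝ≥0∞)⁻¹ • μ.map (HMap 0) +
      (2 / 9 : ℝ≥0∞) • ∑ i : Fin 4, μ.map (HMap i.succ) = μ := by
  obtain rfl := hμ.eq_muStar
  have h01 := ae_muStar_mem_Icc
  have h0 : ∀ᵐ y ∂muStar, 0 ≤ y := h01.mono fun _ hy => hy.1
  have h14 := map_HMap_one_add_map_HMap_four muStar_eq_map_prod h0
  have hsum : ∑ i : Fin 4, muStar.map (HMap i.succ) = (4 : ℝ≥0∞) • muStar := calc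
    _ = (muStar.map (HMap 1) + muStar.map (HMap 4)) + (muStar + muStar) := by
      rw [Fin.sum_univ_four]
      change muStar.map (HMap 1) + muStar.map (HMap 2) + muStar.map (HMap 3)
        + muStar.map (HMap 4) = _
      rw [map_HMap_two h14 h0, map_HMap_three h14 h01]
      abel
    _ = (4 : ℝ≥0∞) • muStar := by rw [h14, ← two_smul ℝ≥0∞ muStar, ← add_smul]; norm_num
  have hweights : (9 : ℝ≥0∞)⁻¹ + 2 / 9 * 4 = 1 := by
    rw [div_eq_mul_inv, mul_right_comm, ← one_add_mul]
    norm_num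
    exact ENNReal.mul_inv_cancel (by norm_num) (by norm_num)
  rw [show HMap 0 = id from rfl, Measure.map_id, hsum, smul_smul, ← add_smul, hweights, one_smul]
end
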